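/- arXiv:2605.21262 — 6 statements merged into one kernel-verified Lean document; each statement's English description precedes it below -/
import Mathlib

section
/- Swap of frame and consequence closures (forward under-approximation). For every set T of semantic triples, ρ_frame→(ρ_cons↘(T)) ⊆ ρ_cons↘(ρ_frame→(T)). -/
namespace SepLogic

/-- A store: a program part assigning values to program variables and a
logical part assigning values to logical variables. -/
structure Store (Xp Xl V : Type) where
  p : Xp → V
  l : Xl → V

/-- A heap: a partial function from locations to values. -/
abbrev Heap (L V : Type) := L → Option V

/-- Domain of a heap. -/
def hdom {L V : Type} (h : Heap L V) : Set L := {l | h l ≠ none}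

/-- Disjointness of heaps. -/
def hdisj {L V : Type} (h1 h2 : Heap L V) : Prop := hdom h1 ∩ hdom h2 = ∅

/-- Join of two heaps: `h1 l` if `l ∈ dom h1`, `h2 l` otherwise. -/
def hjoin {L V : Type} (h1 h2 : Heap L V) : Heap L V :=
  fun l => match h1 l with
    | some v => some v
    | none => h2 l

/-- A memory: a store together with a heap. -/
abbrev Mem (Xp Xl V L : Type) := Store Xp Xl V × Heap L V

/-- Separating product `P • R` on sets of memories. -/
def sep {Xp Xl V L : Type} (P R : Set (Mem Xp Xl V L)) : Set (Mem Xp Xl V L) :=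
  {m | ∃ s h1 h2, (s, h1) ∈ P ∧ (s, h2) ∈ R ∧ hdisj h1 h2 ∧ m = (s, hjoin h1 h2)}

/-- Universal frame: membership is invariant under updates of program variables. -/
def UnivFrame {Xp Xl V L : Type} [DecidableEq Xp] (R : Set (Mem Xp Xl V L)) : Prop :=
  ∀ (sp : Xp → V) (sl : Xl → V) (h : Heap L V) (x : Xp) (v : V),
    (⟨sp, sl⟩, h) ∈ R → (⟨Function.update sp x v, sl⟩, h) ∈ R

/-- Heap compatibility `P ▶◀ R`. -/
def hcomp {Xp Xl V L : Type} (P R : Set (Mem Xp Xl V L)) : Prop :=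
  ∀ s h s' h', (s, h) ∈ P → (s', h') ∈ R → s = s' → hdisj h h'

/-- Existential generalization `∃X.P` over a set `X` of logical variables. -/
def eexists {Xp Xl V L : Type} (X : Set Xl) (P : Set (Mem Xp Xl V L)) :
    Set (Mem Xp Xl V L) :=
  {m | ∃ sl : Xl → V, (⟨m.1.p, sl⟩, m.2) ∈ P ∧ ∀ x ∉ X, m.1.l x = sl x}

/-- Additive lifting of a command semantics to sets of memories. -/
def lift {Xp Xl V L : Type} (f : Mem Xp Xl V L → Set (Mem Xp Xl V L))
    (P : Set (Mem Xp Xl V L)) : Set (Mem Xp Xl V L) :=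
  ⋃ σ ∈ P, f σ

/-- Backward lifting of a command semantics. -/
def bwd {Xp Xl V L : Type} (f : Mem Xp Xl V L → Set (Mem Xp Xl V L))
    (Q : Set (Mem Xp Xl V L)) : Set (Mem Xp Xl V L) :=
  {σ | (f σ ∩ Q).Nonempty}

/-- (L1) logical-store preservation. -/
def L1 {Xp Xl V L : Type} (f : Mem Xp Xl V L → Set (Mem Xp Xl V L)) : Prop :=
  ∀ (sp : Xp → V) (sl : Xl → V) (h : Heap L V) (tp : Xp → V) (tl : Xl → V)
    (k : Heap L V), (⟨tp, tl⟩, k) ∈ f (⟨sp, sl⟩, h) → tl = sl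

/-- (L2) frame-in. -/
def L2 {Xp Xl V L : Type} (f : Mem Xp Xl V L → Set (Mem Xp Xl V L)) : Prop :=
  ∀ (s : Store Xp Xl V) (h : Heap L V) (t : Store Xp Xl V) (k h2 : Heap L V),
    (t, k) ∈ f (s, h) → hdisj h h2 → hdisj k h2 →
      (t, hjoin k h2) ∈ f (s, hjoin h h2)

/-- (L3) frame-out. -/
def L3 {Xp Xl V L : Type} (f : Mem Xp Xl V L → Set (Mem Xp Xl V L)) : Prop :=
  ∀ (s : Store Xp Xl V) (h h2 : Heap L V) (t : Store Xp Xl V) (k : Heap L V),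
    hdisj h h2 → (t, k) ∈ f (s, hjoin h h2) →
      ∃ k1, hdisj k1 h2 ∧ k = hjoin k1 h2 ∧ (t, k1) ∈ f (s, h)

/-- (L4) backward frame-out. -/
def L4 {Xp Xl V L : Type} (f : Mem Xp Xl V L → Set (Mem Xp Xl V L)) : Prop :=
  ∀ (s : Store Xp Xl V) (h : Heap L V) (t : Store Xp Xl V) (k1 k2 : Heap L V),
    hdisj k1 k2 → (t, hjoin k1 k2) ∈ f (s, h) →
      ∃ h1, hdisj h1 k2 ∧ h = hjoin h1 k2 ∧ (t, k1) ∈ f (s, h1)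

/-- (L5) logical equivariance. -/
def L5 {Xp Xl V L : Type} (f : Mem Xp Xl V L → Set (Mem Xp Xl V L)) : Prop :=
  ∀ (sp : Xp → V) (sl : Xl → V) (h : Heap L V) (tp : Xp → V) (k : Heap L V)
    (sl' : Xl → V),
    (⟨tp, sl⟩, k) ∈ f (⟨sp, sl⟩, h) → (⟨tp, sl'⟩, k) ∈ f (⟨sp, sl'⟩, h)

/-- A semantic triple (for a fixed atomic command): a pair of sets of memories. -/
abbrev Triple (Xp Xl V L : Type) := Set (Mem Xp Xl V L) × Set (Mem Xp Xl V L)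

/-- Exists closure. -/
def rhoExists {Xp Xl V L : Type} (T : Set (Triple Xp Xl V L)) : Set (Triple Xp Xl V L) :=
  {t | ∃ (P Q : Set (Mem Xp Xl V L)) (X : Set Xl),
    (P, Q) ∈ T ∧ t = (eexists X P, eexists X Q)}

/-- Forward frame closure. -/
def rhoFrameFwd {Xp Xl V L : Type} [DecidableEq Xp]
    (T : Set (Triple Xp Xl V L)) : Set (Triple Xp Xl V L) :=
  {t | ∃ (P Q R : Set (Mem Xp Xl V L)),
    (P, Q) ∈ T ∧ UnivFrame R ∧ hcomp P R ∧ t = (sep P R, sep Q R)}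

/-- Backward frame closure. -/
def rhoFrameBwd {Xp Xl V L : Type} [DecidableEq Xp]
    (T : Set (Triple Xp Xl V L)) : Set (Triple Xp Xl V L) :=
  {t | ∃ (P Q R : Set (Mem Xp Xl V L)),
    (P, Q) ∈ T ∧ UnivFrame R ∧ hcomp Q R ∧ t = (sep P R, sep Q R)}

/-- Forward over-approximation consequence closure. -/
def rhoConsFwdOver {Xp Xl V L : Type} (T : Set (Triple Xp Xl V L)) :
    Set (Triple Xp Xl V L) :=
  {t | ∃ (P Q Q' : Set (Mem Xp Xl V L)), (P, Q) ∈ T ∧ Q ⊆ Q' ∧ t = (P, Q')}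

/-- Forward under-approximation consequence closure. -/
def rhoConsFwdUnder {Xp Xl V L : Type} (T : Set (Triple Xp Xl V L)) :
    Set (Triple Xp Xl V L) :=
  {t | ∃ (P Q Q' : Set (Mem Xp Xl V L)), (P, Q) ∈ T ∧ Q' ⊆ Q ∧ t = (P, Q')}

/-- Backward over-approximation consequence closure. -/
def rhoConsBwdOver {Xp Xl V L : Type} (T : Set (Triple Xp Xl V L)) :
    Set (Triple Xp Xl V L) :=
  {t | ∃ (P P' Q : Set (Mem Xp Xl V L)), (P, Q) ∈ T ∧ P ⊆ P' ∧ t = (P', Q)}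

/-- Disjunction closure. -/
def rhoDisj {Xp Xl V L : Type} (T : Set (Triple Xp Xl V L)) : Set (Triple Xp Xl V L) :=
  {t | ∃ (I : Type) (Ps Qs : I → Set (Mem Xp Xl V L)),
    (∀ i, (Ps i, Qs i) ∈ T) ∧ t = (⋃ i, Ps i, ⋃ i, Qs i)}

theorem sep_mono_left {Xp Xl V L : Type} {P P' : Set (Mem Xp Xl V L)}
    (R : Set (Mem Xp Xl V L)) (hP : P ⊆ P') : sep P R ⊆ sep P' R :=
  fun _ ⟨s, h1, h2, hs, hr, hd, hm⟩ => ⟨s, h1, h2, hP hs, hr, hd, hm⟩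

/-- Swap of frame and consequence closures (forward under-approximation). -/
theorem frame_cons_swap_fwd_under {Xp Xl V L : Type} [DecidableEq Xp]
    (T : Set (Triple Xp Xl V L)) :
    rhoFrameFwd (rhoConsFwdUnder T) ⊆ rhoConsFwdUnder (rhoFrameFwd T) := by
  rintro _ ⟨P, Q', R, ⟨P₀, Q, Q'', hPQ, hQ'', hPQ'⟩, hR, hPR, rfl⟩
  obtain ⟨rfl, rfl⟩ := Prod.mk.inj hPQ'
  exact ⟨sep P R, sep Q R, sep Q' R, ⟨P, Q, R, hPQ, hR, hPR, rfl⟩,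
    sep_mono_left R hQ'', rfl⟩

end SepLogic
end

section
/- Swap of frame and consequence closures (backward over-approximation). For every set T of semantic triples, ρ_frame←(ρ_cons↖(T)) ⊆ ρ_cons↖(ρ_frame←(T)). -/
namespace SepLogic

/-- Swap of frame and consequence closures (backward over-approximation). -/
theorem frame_cons_swap_bwd_over {Xp Xl V L : Type} [DecidableEq Xp]
    (T : Set (Triple Xp Xl V L)) :
    rhoFrameBwd (rhoConsBwdOver T) ⊆ rhoConsBwdOver (rhoFrameBwd T) := by
  rintro _ ⟨P', Q, R, ⟨P, _, _, hPQ, hPP', heq⟩, hR, hQR, rfl⟩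
  obtain ⟨rfl, rfl⟩ := Prod.mk.inj heq
  exact ⟨sep P R, sep P' R, sep Q R, ⟨P, Q, R, hPQ, hR, hQR, rfl⟩, sep_mono_left R hPP', rfl⟩

end SepLogic
end

section
/- Swap of frame and disjunction closures (forward). For every set T of semantic triples, ρ_frame→(ρ_disj(T)) ⊆ ρ_disj(ρ_frame→(T)). -/
namespace SepLogic

theorem sep_iUnion_left {Xp Xl V L I : Type} (A : I → Set (Mem Xp Xl V L))
    (R : Set (Mem Xp Xl V L)) : sep (⋃ i, A i) R = ⋃ i, sep (A i) R := by
  ext m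
  simp only [sep, Set.mem_iUnion, Set.mem_ofPred_eq]
  constructor
  · rintro ⟨s, h1, h2, ⟨i, hs⟩, hr, hd, rfl⟩
    exact ⟨i, s, h1, h2, hs, hr, hd, rfl⟩
  · rintro ⟨i, s, h1, h2, hs, hr, hd, rfl⟩
    exact ⟨s, h1, h2, ⟨i, hs⟩, hr, hd, rfl⟩

theorem hcomp.mono_left {Xp Xl V L : Type} {P P' R : Set (Mem Xp Xl V L)}
    (hPR : hcomp P R) (hP' : P' ⊆ P) : hcomp P' R :=
  fun s h s' h' hs => hPR s h s' h' (hP' hs)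

/-- Swap of frame and disjunction closures (forward). -/
theorem frame_disj_swap_fwd {Xp Xl V L : Type} [DecidableEq Xp]
    (T : Set (Triple Xp Xl V L)) :
    rhoFrameFwd (rhoDisj T) ⊆ rhoDisj (rhoFrameFwd T) := by
  rintro _ ⟨P, Q, R, ⟨I, Ps, Qs, hT, hPQ⟩, hR, hcompPR, rfl⟩
  obtain ⟨rfl, rfl⟩ := Prod.mk.inj hPQ
  refine ⟨I, fun i => sep (Ps i) R, fun i => sep (Qs i) R, fun i => ?_, ?_⟩
  · exact ⟨Ps i, Qs i, R, hT i, hR, hcompPR.mono_left (Set.subset_iUnion Ps i), rfl⟩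
  · rw [sep_iUnion_left, sep_iUnion_left]

end SepLogic
end

section
/- Soundness and completeness of the backward over-approximation (necessary-condition) proof system (Theorem 4.5, Bwd-over column). For every regular command r and all sets of states P, Q ⊆ M: ⊢_NC (P, r, Q) if and only if ⟦←r⟧ Q ⊆ P. -/
/-!
Everything rests on computing `⟦←r⟧` compositionally: it sends `r₁ ; r₂` to the composite
`⟦←r₁⟧ ∘ ⟦←r₂⟧`, `r₁ + r₂` to the union, and `r*` to `⋃ n, ⟦←r⟧ⁿ`. These identities hold because
`⟦r⟧` preserves unions, so `⟦r⟧ P` meets `Q` exactly when `P` meets `⟦←r⟧ Q`. Soundness is then an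
induction on derivations, an invariant `Q` of `(Iter)` being closed under every `⟦←r⟧ⁿ`.
Completeness derives `(⟦←r⟧ Q, r, Q)` by induction on `r`; for `r*` the invariant is `⟦←r*⟧ Q`
itself, which contains `Q` and is closed under `⟦←r⟧`.
-/
namespace RegCmd

/-- Regular commands over a type `C` of atomic commands. -/
inductive Reg (C : Type) : Type
  | atom : C → Reg C
  | seq : Reg C → Reg C → Reg C
  | choice : Reg C → Reg C → Reg C
  | star : Reg C → Reg C

/-- Collecting (forward) semantics of regular commands. -/
def sem {C M : Type} (a : C → M → Set M) : Reg C → Set M → Set M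
  | .atom c => fun P => ⋃ σ ∈ P, a c σ
  | .seq r1 r2 => fun P => sem a r2 (sem a r1 P)
  | .choice r1 r2 => fun P => sem a r1 P ∪ sem a r2 P
  | .star r => fun P => ⋃ n : ℕ, (sem a r)^[n] P

/-- Backward semantics of regular commands. -/
def bsem {C M : Type} (a : C → M → Set M) (r : Reg C) (Q : Set M) : Set M :=
  {σ | (sem a r {σ} ∩ Q).Nonempty}

/-- The backward over-approximation (necessary-condition) proof system. -/
inductive NC {C M : Type} (a : C → M → Set M) : Set M → Reg C → Set M → Prop
  | atom {c : C} {P Q : Set M} :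
      bsem a (.atom c) Q ⊆ P → NC a P (.atom c) Q
  | seq {P S Q : Set M} {r1 r2 : Reg C} :
      NC a P r1 S → NC a S r2 Q → NC a P (.seq r1 r2) Q
  | choice {P Q : Set M} {r1 r2 : Reg C} :
      NC a P r1 Q → NC a P r2 Q → NC a P (.choice r1 r2) Q
  | iter {Q : Set M} {r : Reg C} :
      NC a Q r Q → NC a Q (.star r) Q
  | cons {P P' Q Q' : Set M} {r : Reg C} :
      P' ⊆ P → NC a P' r Q' → Q ⊆ Q' → NC a P r Q

theorem iterate_iUnion {α : Type*} {f : Set α → Set α}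
    (hf : ∀ {ι : Type} (s : ι → Set α), f (⋃ i, s i) = ⋃ i, f (s i))
    {ι : Type} (s : ι → Set α) (n : ℕ) : f^[n] (⋃ i, s i) = ⋃ i, f^[n] (s i) := by
  induction n with
  | zero => rfl
  | succ n ih => simp only [Function.iterate_succ_apply', ih, hf]

section

variable {C M : Type} (a : C → M → Set M)

theorem sem_iUnion (r : Reg C) {ι : Type} (s : ι → Set M) :
    sem a r (⋃ i, s i) = ⋃ i, sem a r (s i) := by
  induction r generalizing ι with
  | atom c => exact Set.biUnion_iUnion s (a c)
  | seq r1 r2 ih1 ih2 => simp only [sem, ih1, ih2]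
  | choice r1 r2 ih1 ih2 => simp only [sem, ih1, ih2, Set.iUnion_union_distrib]
  | star r ih =>
    simp only [sem, iterate_iUnion (fun s => ih s)]
    exact Set.iUnion_comm _

theorem sem_eq_biUnion (r : Reg C) (P : Set M) : sem a r P = ⋃ σ ∈ P, sem a r {σ} := by
  conv_lhs => rw [← Set.biUnion_of_singleton P, Set.biUnion_eq_iUnion]
  rw [sem_iUnion, Set.biUnion_eq_iUnion]

theorem sem_inter_nonempty_iff (r : Reg C) (P Q : Set M) :
    (sem a r P ∩ Q).Nonempty ↔ (P ∩ bsem a r Q).Nonempty := by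
  rw [sem_eq_biUnion, Set.iUnion₂_inter, Set.nonempty_biUnion]
  rfl

theorem bsem_mono (r : Reg C) : Monotone (bsem a r) :=
  fun _ _ hQ _ ⟨τ, hτ, hτQ⟩ => ⟨τ, hτ, hQ hτQ⟩

theorem bsem_iUnion (r : Reg C) {ι : Type} (s : ι → Set M) :
    bsem a r (⋃ i, s i) = ⋃ i, bsem a r (s i) := by
  ext σ
  simp only [bsem, Set.inter_iUnion, Set.nonempty_iUnion, Set.mem_iUnion]
  rfl

theorem bsem_seq (r1 r2 : Reg C) (Q : Set M) :
    bsem a (.seq r1 r2) Q = bsem a r1 (bsem a r2 Q) :=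
  Set.ext fun σ => sem_inter_nonempty_iff a r2 (sem a r1 {σ}) Q

theorem bsem_choice (r1 r2 : Reg C) (Q : Set M) :
    bsem a (.choice r1 r2) Q = bsem a r1 Q ∪ bsem a r2 Q :=
  Set.ext fun σ => by simp only [bsem, sem, Set.union_inter_distrib_right, Set.union_nonempty]; rfl

theorem iterate_sem_inter_nonempty_iff (r : Reg C) (n : ℕ) (P Q : Set M) :
    ((sem a r)^[n] P ∩ Q).Nonempty ↔ (P ∩ (bsem a r)^[n] Q).Nonempty := by
  induction n generalizing P with
  | zero => rfl
  | succ n ih =>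
    rw [Function.iterate_succ_apply, ih, Function.iterate_succ_apply', sem_inter_nonempty_iff]

theorem bsem_star (r : Reg C) (Q : Set M) :
    bsem a (.star r) Q = ⋃ n : ℕ, (bsem a r)^[n] Q := by
  ext σ
  simp only [bsem, sem, Set.iUnion_inter, Set.nonempty_iUnion, Set.mem_iUnion,
    iterate_sem_inter_nonempty_iff, Set.singleton_inter_nonempty]
  rfl

variable {a} in
theorem NC.bsem_subset {P Q : Set M} {r : Reg C} (h : NC a P r Q) : bsem a r Q ⊆ P := by
  induction h with
  | atom h => exact h
  | seq _ _ ih1 ih2 => exact (bsem_seq a _ _ _).trans_le ((bsem_mono a _ ih2).trans ih1)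
  | choice _ _ ih1 ih2 => exact (bsem_choice a _ _ _).trans_le (Set.union_subset ih1 ih2)
  | @iter Q r _ ih =>
    rw [bsem_star]
    refine Set.iUnion_subset fun n => ?_
    simpa using (Function.Commute.id_right (f := bsem a r)).iterate_le_of_map_le
      (bsem_mono a r) monotone_id ih n
  | cons hP _ hQ ih => exact ((bsem_mono a _ hQ).trans ih).trans hP

theorem NC.of_bsem (r : Reg C) (Q : Set M) : NC a (bsem a r Q) r Q := by
  induction r generalizing Q with
  | atom c => exact NC.atom le_rfl
  | seq r1 r2 ih1 ih2 => exact bsem_seq a r1 r2 Q ▸ NC.seq (ih1 _) (ih2 Q)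
  | choice r1 r2 ih1 ih2 =>
    rw [bsem_choice]
    exact NC.choice (NC.cons Set.subset_union_left (ih1 Q) le_rfl)
      (NC.cons Set.subset_union_right (ih2 Q) le_rfl)
  | star r ih =>
    have hQ : Q ⊆ bsem a (.star r) Q :=
      bsem_star a r Q ▸ Set.subset_iUnion (fun n => (bsem a r)^[n] Q) 0
    have hinv : bsem a r (bsem a (.star r) Q) ⊆ bsem a (.star r) Q := by
      rw [bsem_star, bsem_iUnion]
      exact Set.iUnion_subset fun n => Set.subset_iUnion_of_subset (n + 1)
        (Function.iterate_succ_apply' (bsem a r) n Q).ge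
    exact NC.cons le_rfl (NC.iter (NC.cons hinv (ih _) le_rfl)) hQ

end

/-- Theorem 4.5 (Bwd-over column): soundness and completeness of the
backward over-approximation (necessary-condition) proof system. -/
theorem NC_sound_complete {C M : Type} (a : C → M → Set M)
    (r : Reg C) (P Q : Set M) :
    NC a P r Q ↔ bsem a r Q ⊆ P :=
  ⟨NC.bsem_subset, fun h => NC.cons h (NC.of_bsem a r Q) le_rfl⟩

end RegCmd
end

section
/- Soundness and completeness of the forward under-approximation (incorrectness-logic-style) proof system (Theorem 4.5, Fwd-under column). For every regular command r and all sets of states P, Q ⊆ M: ⊢_IL (P, r, Q) if and only if Q ⊆ ⟦r⟧ P. -/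
namespace RegCmd

/-- The forward under-approximation (incorrectness-logic-style) proof system. -/
inductive IL {C M : Type} (a : C → M → Set M) : Set M → Reg C → Set M → Prop
  | atom {c : C} {P Q : Set M} :
      Q ⊆ sem a (.atom c) P → IL a P (.atom c) Q
  | seq {P S Q : Set M} {r1 r2 : Reg C} :
      IL a P r1 S → IL a S r2 Q → IL a P (.seq r1 r2) Q
  | choice {P Q1 Q2 : Set M} {r1 r2 : Reg C} :
      IL a P r1 Q1 → IL a P r2 Q2 → IL a P (.choice r1 r2) (Q1 ∪ Q2)
  | iter {Ps : ℕ → Set M} {r : Reg C} :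
      (∀ n, IL a (Ps n) r (Ps (n + 1))) → IL a (Ps 0) (.star r) (⋃ n, Ps n)
  | cons {P P' Q Q' : Set M} {r : Reg C} :
      P' ⊆ P → IL a P' r Q' → Q ⊆ Q' → IL a P r Q

/-!
Soundness is an induction on derivations, using monotonicity of `sem`; in the `Iter` case the
chain `P (n + 1) ⊆ ⟦r⟧ (P n)` is dominated by the iterates `⟦r⟧ⁿ (P 0)`. For completeness, the
strongest postcondition `⟦r⟧ P` is derivable by structural induction on `r` (for `r*` apply
`Iter` to the iterates themselves), and `Cons` shrinks it to any `Q ⊆ ⟦r⟧ P`.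
-/

theorem sem_mono {C M : Type} (a : C → M → Set M) (r : Reg C) : Monotone (sem a r) := by
  induction r with
  | atom c => exact fun _ _ h => Set.biUnion_mono h fun _ _ => subset_rfl
  | seq r1 r2 ih1 ih2 => exact ih2.comp ih1
  | choice r1 r2 ih1 ih2 => exact fun _ _ h => Set.union_subset_union (ih1 h) (ih2 h)
  | star r ih => exact fun _ _ h => Set.iUnion_mono fun n => ih.iterate n h

theorem IL.subset_sem {C M : Type} {a : C → M → Set M} {r : Reg C} {P Q : Set M}
    (h : IL a P r Q) : Q ⊆ sem a r P := by
  induction h with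
  | atom h => exact h
  | seq _ _ ih1 ih2 => exact ih2.trans (sem_mono a _ ih1)
  | choice _ _ ih1 ih2 => exact Set.union_subset_union ih1 ih2
  | @iter Ps r _ ih =>
    have chain_le_iterate (n : ℕ) : Ps n ⊆ (sem a r)^[n] (Ps 0) :=
      (sem_mono a r).seq_le_seq (y := fun k => (sem a r)^[k] (Ps 0)) n subset_rfl
        (fun k _ => ih k) (fun k _ => (Function.iterate_succ_apply' _ k _).ge)
    exact Set.iUnion_mono chain_le_iterate
  | cons hP _ hQ ih => exact hQ.trans (ih.trans (sem_mono a _ hP))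

theorem IL.sem_post {C M : Type} (a : C → M → Set M) (r : Reg C) (P : Set M) :
    IL a P r (sem a r P) := by
  induction r generalizing P with
  | atom c => exact .atom subset_rfl
  | seq r1 r2 ih1 ih2 => exact .seq (ih1 P) (ih2 _)
  | choice r1 r2 ih1 ih2 => exact .choice (ih1 P) (ih2 P)
  | star r ih =>
    refine .iter (Ps := fun n => (sem a r)^[n] P) fun n => ?_
    rw [Function.iterate_succ_apply']
    exact ih _

/-- Theorem 4.5 (Fwd-under column): soundness and completeness of the
forward under-approximation (incorrectness-logic-style) proof system. -/
theorem IL_sound_complete {C M : Type} (a : C → M → Set M)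
    (r : Reg C) (P Q : Set M) :
    IL a P r Q ↔ Q ⊆ sem a r P :=
  ⟨IL.subset_sem, fun h => .cons subset_rfl (IL.sem_post a r P) h⟩

end RegCmd
end

section
/- Soundness of the Exists rule for forward over-approximation triples. Let f : M -> Set M be a command semantics satisfying (L1) logical-store preservation and (L5) logical equivariance, with additive lifting F. If F(P) ⊆ Q, then for every set of logical variables X ⊆ Xl, F(∃X.P) ⊆ ∃X.Q. -/
namespace SepLogic

section

variable {Xp Xl V L : Type} {f : Mem Xp Xl V L → Set (Mem Xp Xl V L)}

theorem mem_lift {P : Set (Mem Xp Xl V L)} {τ : Mem Xp Xl V L} :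
    τ ∈ lift f P ↔ ∃ σ ∈ P, τ ∈ f σ :=
  Set.mem_iUnion₂.trans <| by simp only [exists_prop]

theorem eexists_mono (X : Set Xl) {P Q : Set (Mem Xp Xl V L)} (hPQ : P ⊆ Q) :
    eexists X P ⊆ eexists X Q :=
  fun _ ⟨sl, hP, hagree⟩ => ⟨sl, hPQ hP, hagree⟩

theorem L1.store_l_eq (hL1 : L1 f) {σ τ : Mem Xp Xl V L} (hτ : τ ∈ f σ) :
    τ.1.l = σ.1.l :=
  hL1 σ.1.p σ.1.l σ.2 τ.1.p τ.1.l τ.2 hτ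

theorem mem_apply_replace_logical (hL1 : L1 f) (hL5 : L5 f) {σ τ : Mem Xp Xl V L}
    (hτ : τ ∈ f σ) (sl : Xl → V) :
    (⟨τ.1.p, sl⟩, τ.2) ∈ f (⟨σ.1.p, sl⟩, σ.2) := by
  obtain ⟨⟨sp, sl₀⟩, h⟩ := σ
  obtain ⟨⟨tp, tl⟩, k⟩ := τ
  obtain rfl : tl = sl₀ := hL1.store_l_eq hτ
  exact hL5 sp tl h tp k sl hτ

/-- By (L5) a run from a memory of `∃X.P` replays from the `P`-memory it generalizes, and by (L1)
the two outputs carry the two inputs' logical stores, which agree outside `X`. -/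
theorem lift_eexists_subset (hL1 : L1 f) (hL5 : L5 f) (X : Set Xl) (P : Set (Mem Xp Xl V L)) :
    lift f (eexists X P) ⊆ eexists X (lift f P) := by
  intro τ hτ
  obtain ⟨σ, ⟨sl, hσP, hagree⟩, hστ⟩ := mem_lift.1 hτ
  refine ⟨sl, mem_lift.2 ⟨_, hσP, mem_apply_replace_logical hL1 hL5 hστ sl⟩, ?_⟩
  rw [hL1.store_l_eq hστ]
  exact hagree

end

/-- Soundness of the Exists rule for forward over-approximation triples. -/
theorem exists_rule_sound_fwd_over {Xp Xl V L : Type}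
    (f : Mem Xp Xl V L → Set (Mem Xp Xl V L))
    (hL1 : L1 f) (hL5 : L5 f)
    (P Q : Set (Mem Xp Xl V L))
    (hFP : lift f P ⊆ Q) :
    ∀ X : Set Xl, lift f (eexists X P) ⊆ eexists X Q :=
  fun X => (lift_eexists_subset hL1 hL5 X P).trans (eexists_mono X hFP)

end SepLogic
end
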